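/- arXiv:2006.10246 — 2 statements merged into one kernel-verified Lean document; each statement's English description precedes it below -/
import Mathlib

section
/- For a positive semi-definite 2×2 matrix K = [[K1, K3],[K3, K2]] with K1, K2 > 0, and (z1, z2) ~ N(0, K), the expectation E[ReLU(z1)·ReLU(z2)] equals (1/(2π))·(c(π − arccos(c)) + √(1 − c²))·√(K1·K2), where c = K3/√(K1·K2) and ReLU(x) = max(0, x). -/
open MeasureTheory ProbabilityTheory Real

/-!
Write `c = cos θ₀` with `θ₀ = arccos c ∈ [0, π]`. For independent standard Gaussians `x, y` one has
`z₁ = √K1 · x` and `z₂ = √K2 · (cos θ₀ · x + sin θ₀ · y)`, so by positive homogeneity of ReLU the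
expectation is `√(K1 K2)` times the degree-one arc-cosine kernel
`E[ReLU(x) ReLU(cos θ₀ · x + sin θ₀ · y)]`. In polar coordinates `(x, y) = (r cos θ, r sin θ)` the
integrand is `r² ReLU(cos θ) ReLU(cos (θ - θ₀))`, so the Gaussian integral factors into the radial
moment `∫ r³ e^{-r²/2} dr = 2` and the integral of `cos θ cos (θ - θ₀)` over the arc
`θ₀ - π/2 < θ < π/2` where both cosines are positive, which is `(sin θ₀ + (π - θ₀) cos θ₀) / 2`.
-/

/-- The standard Gaussian measure on `ℝ × ℝ`. -/
noncomputable def stdGauss2 : Measure (ℝ × ℝ) :=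
  (gaussianReal 0 1).prod (gaussianReal 0 1)

/-- First coordinate of a centered bivariate Gaussian with covariance
`[[K1, K3], [K3, K2]]`, realized from two independent standard Gaussians. -/
noncomputable def gaussZ1 (K1 : ℝ) (p : ℝ × ℝ) : ℝ := Real.sqrt K1 * p.1

/-- Second coordinate of a centered bivariate Gaussian with covariance
`[[K1, K3], [K3, K2]]`, realized from two independent standard Gaussians. -/
noncomputable def gaussZ2 (K1 K2 K3 : ℝ) (p : ℝ × ℝ) : ℝ :=
  (K3 / Real.sqrt K1) * p.1 + Real.sqrt (K2 - K3 ^ 2 / K1) * p.2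

lemma integral_Ioi_pow_three_mul_exp_neg_sq_div_two :
    ∫ r in Set.Ioi (0 : ℝ), r ^ 3 * exp (-r ^ 2 / 2) = 2 := by
  have h := integral_rpow_mul_exp_neg_mul_rpow (p := 2) (q := 3) (b := 1 / 2)
    two_pos (by norm_num) (by norm_num)
  norm_num at h
  convert h using 5 with r
  ring

lemma stdGauss2_eq_withDensity :
    stdGauss2 = volume.withDensity fun p ↦ gaussianPDF 0 1 p.1 * gaussianPDF 0 1 p.2 := by
  rw [stdGauss2, gaussianReal_of_var_ne_zero 0 one_ne_zero,
    prod_withDensity (measurable_gaussianPDF 0 1) (measurable_gaussianPDF 0 1),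
    Measure.volume_eq_prod]

lemma integral_stdGauss2 {E : Type*} [NormedAddCommGroup E] [NormedSpace ℝ E] (f : ℝ × ℝ → E) :
    ∫ p, f p ∂stdGauss2 = ∫ p, (gaussianPDFReal 0 1 p.1 * gaussianPDFReal 0 1 p.2) • f p := by
  rw [stdGauss2_eq_withDensity, integral_withDensity_eq_integral_toReal_smul
    (by fun_prop) (ae_of_all _ fun _ ↦ ENNReal.mul_lt_top gaussianPDF_lt_top gaussianPDF_lt_top)]
  simp [gaussianPDF, ENNReal.toReal_mul, ENNReal.toReal_ofReal (gaussianPDFReal_nonneg _ _ _)]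

lemma gaussianPDFReal_mul_gaussianPDFReal (x y : ℝ) :
    gaussianPDFReal 0 1 x * gaussianPDFReal 0 1 y = (2 * π)⁻¹ * exp (-(x ^ 2 + y ^ 2) / 2) := by
  simp only [gaussianPDFReal, NNReal.coe_one, mul_one, sub_zero]
  rw [mul_mul_mul_comm, ← exp_add, ← mul_inv, mul_self_sqrt (by positivity)]
  ring_nf

lemma integral_stdGauss2_eq_integral_polar {E : Type*} [NormedAddCommGroup E] [NormedSpace ℝ E]
    (f : ℝ × ℝ → E) :
    ∫ p, f p ∂stdGauss2 = (2 * π)⁻¹ • ∫ p in Set.Ioi 0 ×ˢ Set.Ioo (-π) π,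
      (p.1 * exp (-p.1 ^ 2 / 2)) • f (p.1 * cos p.2, p.1 * sin p.2) := by
  rw [integral_stdGauss2, ← integral_comp_polarCoord_symm, ← integral_smul]
  refine setIntegral_congr_fun polarCoord.open_target.measurableSet fun p _ ↦ ?_
  have hr : (p.1 * cos p.2) ^ 2 + (p.1 * sin p.2) ^ 2 = p.1 ^ 2 := by
    linear_combination p.1 ^ 2 * cos_sq_add_sin_sq p.2
  simp only [polarCoord_symm_apply, gaussianPDFReal_mul_gaussianPDFReal, hr, smul_smul]
  ring_nf

lemma max_cos_mul_max_cos_sub_eq_indicator {θ₀ θ : ℝ} (h₀ : 0 ≤ θ₀) (hπ : θ₀ ≤ π)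
    (hθ : θ ∈ Set.Ioo (-π) π) :
    max (cos θ) 0 * max (cos (θ - θ₀)) 0 =
      (Set.Ioo (θ₀ - π / 2) (π / 2)).indicator (fun θ ↦ cos θ * cos (θ - θ₀)) θ := by
  obtain ⟨hθl, hθr⟩ := hθ
  by_cases hmem : θ ∈ Set.Ioo (θ₀ - π / 2) (π / 2)
  · rw [Set.indicator_of_mem hmem]
    obtain ⟨hl, hr⟩ := hmem
    rw [max_eq_left (cos_nonneg_of_mem_Icc ⟨by linarith, by linarith⟩),
      max_eq_left (cos_nonneg_of_mem_Icc ⟨by linarith, by linarith⟩)]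
  · rw [Set.indicator_of_notMem hmem]
    -- if `|θ| < π/2`, then `θ ≤ θ₀ - π/2` puts `θ - θ₀` in `[-3π/2, -π/2]`
    have : cos θ ≤ 0 ∨ cos (θ - θ₀) ≤ 0 := by
      rcases le_or_gt (π / 2) |θ| with h | h
      · left
        rw [← cos_abs]
        exact cos_nonpos_of_pi_div_two_le_of_le h (by linarith [abs_lt.2 ⟨hθl, hθr⟩])
      · right
        obtain ⟨hl, hr⟩ := abs_lt.1 h
        have : θ ≤ θ₀ - π / 2 := by
          by_contra!
          exact hmem ⟨this, hr⟩
        rw [← cos_neg]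
        exact cos_nonpos_of_pi_div_two_le_of_le (by linarith) (by linarith)
    rcases this with h | h <;> simp [max_eq_right h]

lemma hasDerivAt_sin_two_mul_sub_add_mul_cos (θ₀ θ : ℝ) :
    HasDerivAt (fun t ↦ sin (2 * t - θ₀) / 4 + t * cos θ₀ / 2) (cos θ * cos (θ - θ₀)) θ := by
  have h := ((((hasDerivAt_id θ).const_mul 2).sub_const θ₀).sin.div_const 4).add
    (((hasDerivAt_id θ).mul_const (cos θ₀)).div_const 2)
  refine h.congr_deriv ?_
  have hadd := cos_add θ (θ - θ₀)
  have hsub := cos_sub θ (θ - θ₀)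
  rw [show θ + (θ - θ₀) = 2 * θ - θ₀ by ring] at hadd
  rw [show θ - (θ - θ₀) = θ₀ by ring] at hsub
  simp only [id]
  linear_combination (1 / 2 : ℝ) * hadd + (1 / 2 : ℝ) * hsub

lemma integral_max_cos_mul_max_cos_sub {θ₀ : ℝ} (h₀ : 0 ≤ θ₀) (hπ : θ₀ ≤ π) :
    ∫ θ in Set.Ioo (-π) π, max (cos θ) 0 * max (cos (θ - θ₀)) 0 =
      (sin θ₀ + (π - θ₀) * cos θ₀) / 2 := by
  have hpi := pi_pos
  rw [setIntegral_congr_fun measurableSet_Ioo fun θ ↦ max_cos_mul_max_cos_sub_eq_indicator h₀ hπ,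
    setIntegral_indicator measurableSet_Ioo,
    Set.inter_eq_self_of_subset_right (Set.Ioo_subset_Ioo (by linarith) (by linarith)),
    ← integral_Ioc_eq_integral_Ioo, ← intervalIntegral.integral_of_le (by linarith),
    intervalIntegral.integral_eq_sub_of_hasDerivAt
      (fun θ _ ↦ hasDerivAt_sin_two_mul_sub_add_mul_cos θ₀ θ)
      ((by fun_prop : Continuous _).intervalIntegrable _ _)]
  rw [show 2 * (π / 2) - θ₀ = π - θ₀ by ring, show 2 * (θ₀ - π / 2) - θ₀ = -(π - θ₀) by ring,
    sin_neg, sin_pi_sub]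
  ring

lemma max_mul_zero_of_nonneg {a : ℝ} (ha : 0 ≤ a) (b : ℝ) : max (a * b) 0 = a * max b 0 := by
  rw [mul_max_of_nonneg _ _ ha, mul_zero]

lemma integral_stdGauss2_max_mul_max_cos_mul_add_sin_mul {θ₀ : ℝ} (h₀ : 0 ≤ θ₀) (hπ : θ₀ ≤ π) :
    ∫ p, max p.1 0 * max (cos θ₀ * p.1 + sin θ₀ * p.2) 0 ∂stdGauss2 =
      (sin θ₀ + (π - θ₀) * cos θ₀) / (2 * π) := by
  have hpolar : Set.EqOn
      (fun p : ℝ × ℝ ↦ (p.1 * exp (-p.1 ^ 2 / 2)) • (max (p.1 * cos p.2) 0 *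
        max (cos θ₀ * (p.1 * cos p.2) + sin θ₀ * (p.1 * sin p.2)) 0))
      (fun p ↦ (p.1 ^ 3 * exp (-p.1 ^ 2 / 2)) * (max (cos p.2) 0 * max (cos (p.2 - θ₀)) 0))
      (Set.Ioi 0 ×ˢ Set.Ioo (-π) π) := by
    rintro ⟨r, θ⟩ ⟨hr, -⟩
    have hrot : cos θ₀ * (r * cos θ) + sin θ₀ * (r * sin θ) = r * cos (θ - θ₀) := by
      rw [cos_sub]
      ring
    simp only [smul_eq_mul, hrot, max_mul_zero_of_nonneg (le_of_lt hr)]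
    ring
  rw [integral_stdGauss2_eq_integral_polar,
    setIntegral_congr_fun (measurableSet_Ioi.prod measurableSet_Ioo) hpolar,
    Measure.volume_eq_prod, ← Measure.prod_restrict,
    integral_prod_mul (f := fun r ↦ r ^ 3 * exp (-r ^ 2 / 2))
      (g := fun θ ↦ max (cos θ) 0 * max (cos (θ - θ₀)) 0),
    integral_Ioi_pow_three_mul_exp_neg_sq_div_two, integral_max_cos_mul_max_cos_sub h₀ hπ,
    smul_eq_mul]
  field_simp

lemma gaussZ2_eq {K1 K2 : ℝ} (hK1 : 0 < K1) (hK2 : 0 < K2) (K3 : ℝ) (p : ℝ × ℝ) :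
    gaussZ2 K1 K2 K3 p = √K2 * (K3 / √(K1 * K2) * p.1 + √(1 - (K3 / √(K1 * K2)) ^ 2) * p.2) := by
  have hfst : √K2 * (K3 / √(K1 * K2)) = K3 / √K1 := by
    rw [sqrt_mul hK1.le]
    field_simp
  have hsnd : √K2 * √(1 - (K3 / √(K1 * K2)) ^ 2) = √(K2 - K3 ^ 2 / K1) := by
    rw [← sqrt_mul hK2.le, div_pow, sq_sqrt (mul_pos hK1 hK2).le]
    congr 1
    field_simp
  rw [gaussZ2, ← hfst, ← hsnd]
  ring

/-- For a PSD 2×2 covariance `K = [[K1,K3],[K3,K2]]` with `K1, K2 > 0` and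
`(z1, z2) ∼ N(0, K)`, the expectation `E[ReLU(z1) · ReLU(z2)]` equals
`(1/(2π)) (c (π − arccos c) + √(1 − c²)) √(K1 K2)` with `c = K3/√(K1 K2)`. -/
theorem rntk_Vphi_relu (K1 K2 K3 : ℝ) (hK1 : 0 < K1) (hK2 : 0 < K2)
    (hPSD : K3 ^ 2 ≤ K1 * K2) :
    ∫ p, max (gaussZ1 K1 p) 0 * max (gaussZ2 K1 K2 K3 p) 0 ∂stdGauss2 =
      (1 / (2 * π)) *
        ((K3 / Real.sqrt (K1 * K2)) * (π - Real.arccos (K3 / Real.sqrt (K1 * K2))) +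
          Real.sqrt (1 - (K3 / Real.sqrt (K1 * K2)) ^ 2)) * Real.sqrt (K1 * K2) := by
  set c := K3 / √(K1 * K2) with hc
  have hc_sq : c ^ 2 ≤ 1 := by
    rw [hc, div_pow, sq_sqrt (mul_pos hK1 hK2).le, div_le_one (mul_pos hK1 hK2)]
    exact hPSD
  obtain ⟨hc_neg, hc_le⟩ := abs_le.1 ((sq_le_one_iff_abs_le_one c).1 hc_sq)
  have hrelu : ∀ p, max (gaussZ1 K1 p) 0 * max (gaussZ2 K1 K2 K3 p) 0 =
      √(K1 * K2) * (max p.1 0 * max (cos (arccos c) * p.1 + sin (arccos c) * p.2) 0) := by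
    intro p
    rw [gaussZ1, gaussZ2_eq hK1 hK2, ← hc, cos_arccos hc_neg hc_le, sin_arccos,
      max_mul_zero_of_nonneg (sqrt_nonneg _), max_mul_zero_of_nonneg (sqrt_nonneg _),
      sqrt_mul hK1.le]
    ring
  rw [integral_congr_ae (ae_of_all _ hrelu), integral_const_mul,
    integral_stdGauss2_max_mul_max_cos_mul_add_sin_mul (arccos_nonneg c) (arccos_le_pi c),
    cos_arccos hc_neg hc_le, sin_arccos]
  ring
end

section
/- For a positive semi-definite 2×2 matrix K = [[K1, K3],[K3, K2]] and (z1, z2) ~ N(0, K), the expectation E[erf'(z1)·erf'(z2)] equals 4/(π·√((1 + 2K1)(1 + 2K2) − 4K3²)), where erf'(x) = (2/√π)·e^{−x²}. -/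
open MeasureTheory ProbabilityTheory Real

/-- The derivative of the Gauss error function: `erf'(x) = (2/√π) e^{−x²}`. -/
noncomputable def erfDeriv (x : ℝ) : ℝ := (2 / Real.sqrt π) * Real.exp (-x ^ 2)

/-! Write `(z1, z2) = L g` with `g` standard Gaussian on `ℝ²` and `L` the Cholesky factor of `K`;
then the integrand is `(4/π) e^{-|L g|²}`. Integrating out one coordinate of `g` at a time, each
time completing the square against the density `e^{-x²/2}`, gives
`det (1 + 2 Lᵀ L)^{-1/2} = det (1 + 2K)^{-1/2}`. -/

lemma integral_exp_neg_sq_affine_gaussianReal (t c : ℝ) :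
    ∫ x, rexp (-(t * x + c) ^ 2) ∂gaussianReal 0 1
      = (√(2 * t ^ 2 + 1))⁻¹ * rexp (-c ^ 2 / (2 * t ^ 2 + 1)) := by
  set A : ℝ := t ^ 2 + 1 / 2
  have hA : 0 < A := by positivity
  have complete_square : ∀ x : ℝ, gaussianPDFReal 0 1 x • rexp (-(t * x + c) ^ 2)
      = (√(2 * π))⁻¹ * rexp (-c ^ 2 / (2 * A)) * rexp (-A * (x + t * c / A) ^ 2) := by
    intro x
    rw [gaussianPDFReal, smul_eq_mul, mul_assoc, ← Real.exp_add, mul_assoc (√(2 * π))⁻¹,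
      ← Real.exp_add]
    push_cast
    congr 2
    · norm_num
    · field_simp
      ring
  have hsqrt : √(π / A) = √(2 * π) * (√(2 * A))⁻¹ := by
    rw [← Real.sqrt_inv, ← Real.sqrt_mul (by positivity)]
    congr 1
    field_simp
  rw [integral_gaussianReal_eq_integral_smul one_ne_zero]
  simp_rw [complete_square]
  rw [integral_const_mul, integral_add_right_eq_self (fun x ↦ rexp (-A * x ^ 2)),
    integral_gaussian, hsqrt, show 2 * t ^ 2 + 1 = 2 * A by ring]
  have : √(2 * π) ≠ 0 := by positivity
  field_simp

lemma integral_exp_neg_mul_sq_gaussianReal {a : ℝ} (ha : 0 ≤ a) :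
    ∫ x, rexp (-a * x ^ 2) ∂gaussianReal 0 1 = (√(2 * a + 1))⁻¹ := by
  simpa [mul_pow, Real.sq_sqrt ha] using integral_exp_neg_sq_affine_gaussianReal (√a) 0

instance isProbabilityMeasure_stdGauss2 : IsProbabilityMeasure stdGauss2 := by
  rw [stdGauss2]; infer_instance

lemma integrable_exp_neg_sq_sub_sq_stdGauss2 (s t u : ℝ) :
    Integrable (fun p : ℝ × ℝ ↦ rexp (-(s * p.1) ^ 2 - (t * p.1 + u * p.2) ^ 2))
      stdGauss2 := by
  refine (integrable_const (1 : ℝ)).mono' (by fun_prop) (ae_of_all _ fun p ↦ ?_)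
  rw [Real.norm_of_nonneg (Real.exp_nonneg _), Real.exp_le_one_iff]
  nlinarith [sq_nonneg (s * p.1), sq_nonneg (t * p.1 + u * p.2)]

lemma integral_exp_neg_sq_sub_sq_stdGauss2 (s t u : ℝ) :
    ∫ p, rexp (-(s * p.1) ^ 2 - (t * p.1 + u * p.2) ^ 2) ∂stdGauss2
      = (√((1 + 2 * s ^ 2) * (1 + 2 * u ^ 2) + 2 * t ^ 2))⁻¹ := by
  have hu : 0 < 2 * u ^ 2 + 1 := by positivity
  set a : ℝ := s ^ 2 + t ^ 2 / (2 * u ^ 2 + 1) with ha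
  have inner : ∀ x : ℝ, ∫ y, rexp (-(s * x) ^ 2 - (t * x + u * y) ^ 2) ∂gaussianReal 0 1
      = (√(2 * u ^ 2 + 1))⁻¹ * rexp (-a * x ^ 2) := by
    intro x
    have split : ∀ y : ℝ, rexp (-(s * x) ^ 2 - (t * x + u * y) ^ 2)
        = rexp (-(s * x) ^ 2) * rexp (-(u * y + t * x) ^ 2) := by
      intro y
      rw [← Real.exp_add]
      ring_nf
    simp_rw [split]
    rw [integral_const_mul, integral_exp_neg_sq_affine_gaussianReal, mul_left_comm,
      ← Real.exp_add]
    congr 2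
    rw [ha]
    field_simp
    ring
  have hdet :
      (1 + 2 * s ^ 2) * (1 + 2 * u ^ 2) + 2 * t ^ 2 = (2 * u ^ 2 + 1) * (2 * a + 1) := by
    rw [ha]
    field_simp
    ring
  rw [stdGauss2, integral_prod _ (integrable_exp_neg_sq_sub_sq_stdGauss2 s t u)]
  simp_rw [inner]
  rw [integral_const_mul, integral_exp_neg_mul_sq_gaussianReal (by positivity), hdet,
    Real.sqrt_mul hu.le, mul_inv]

lemma erfDeriv_mul_erfDeriv (a b : ℝ) :
    erfDeriv a * erfDeriv b = 4 / π * rexp (-a ^ 2 - b ^ 2) := by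
  rw [erfDeriv, erfDeriv, sub_eq_add_neg, Real.exp_add]
  field_simp
  rw [Real.sq_sqrt pi_pos.le]
  ring

/-- Both sides are `det (1 + 2K)`: `gaussZ1`, `gaussZ2` use the Cholesky factor
`L = [[√K1, 0], [K3/√K1, √(K2 - K3²/K1)]]` of `K = L Lᵀ`. -/
lemma det_one_add_two_mul_cholesky {K1 K2 K3 : ℝ} (hK1 : 0 ≤ K1) (hK2 : 0 ≤ K2)
    (hPSD : K3 ^ 2 ≤ K1 * K2) :
    (1 + 2 * √K1 ^ 2) * (1 + 2 * √(K2 - K3 ^ 2 / K1) ^ 2) + 2 * (K3 / √K1) ^ 2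
      = (1 + 2 * K1) * (1 + 2 * K2) - 4 * K3 ^ 2 := by
  rcases hK1.eq_or_lt with rfl | hK1
  · obtain rfl : K3 = 0 := by nlinarith
    simp [Real.sq_sqrt hK2]
  · have hSchur : 0 ≤ K2 - K3 ^ 2 / K1 := by
      rw [sub_nonneg, div_le_iff₀ hK1]
      linarith
    rw [Real.sq_sqrt hK1.le, Real.sq_sqrt hSchur, div_pow, Real.sq_sqrt hK1.le]
    field_simp
    ring

/-- For a PSD 2×2 covariance `K = [[K1,K3],[K3,K2]]` and `(z1, z2) ∼ N(0, K)`,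
`E[erf'(z1) · erf'(z2)] = 4/(π √((1+2K1)(1+2K2) − 4K3²))`. -/
theorem rntk_Vphi_erf_deriv (K1 K2 K3 : ℝ) (hK1 : 0 ≤ K1) (hK2 : 0 ≤ K2)
    (hPSD : K3 ^ 2 ≤ K1 * K2) :
    ∫ p, erfDeriv (gaussZ1 K1 p) * erfDeriv (gaussZ2 K1 K2 K3 p) ∂stdGauss2 =
      4 / (π * Real.sqrt ((1 + 2 * K1) * (1 + 2 * K2) - 4 * K3 ^ 2)) := by
  simp_rw [erfDeriv_mul_erfDeriv, gaussZ1, gaussZ2]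
  rw [integral_const_mul, integral_exp_neg_sq_sub_sq_stdGauss2,
    det_one_add_two_mul_cholesky hK1 hK2 hPSD, ← div_eq_mul_inv, div_div]
end
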